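/- arXiv:1011.4124 — 11 statements merged into one kernel-verified Lean document; each statement's English description precedes it below -/
import Mathlib

section
/- If G is a finite simple graph with chromatic number k such that adding any non-edge strictly increases the chromatic number, then every proper k-coloring of G induces the same partition of the vertex set into color classes (G is uniquely k-colorable). -/
open SimpleGraph

/-- A graph is *upper-critical* if adding any edge between two distinct
non-adjacent vertices strictly increases the chromatic number. -/
def UpperCritical {V : Type*} (G : SimpleGraph V) : Prop :=
  ∀ x y : V, x ≠ y → ¬G.Adj x y →
    G.chromaticNumber < (G ⊔ SimpleGraph.edge x y).chromaticNumber

lemma aux_uc {V : Type*} [Fintype V] (G : SimpleGraph V) (k : ℕ)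
    (hk : G.chromaticNumber = k) (hUC : UpperCritical G)
    (c₁ c₂ : G.Coloring (Fin k)) {x y : V} (h : c₁ x = c₁ y) : c₂ x = c₂ y := by
  by_contra hne
  have hxy : x ≠ y := fun e => hne (by rw [e])
  have hadj : ¬G.Adj x y := fun h' => c₁.valid h' h
  have hlt := hUC x y hxy hadj
  have C : (G ⊔ SimpleGraph.edge x y).Coloring (Fin k) := by
    refine SimpleGraph.Coloring.mk c₂ ?_
    intro a b hab
    rcases hab with h' | h'
    · exact c₂.valid h'
    · rw [edge_adj] at h'
      obtain ⟨⟨rfl, rfl⟩ | ⟨rfl, rfl⟩, _⟩ := h'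
      · exact hne
      · exact fun e => hne e.symm
  have hle : (G ⊔ SimpleGraph.edge x y).chromaticNumber ≤ (k : ℕ∞) := by
    simpa using C.colorable.chromaticNumber_le
  rw [hk] at hlt
  exact absurd (hlt.trans_le hle) (lt_irrefl _)

theorem stmt_0 {V : Type*} [Fintype V] (G : SimpleGraph V) (k : ℕ)
    (hk : G.chromaticNumber = k) (hUC : UpperCritical G)
    (c₁ c₂ : G.Coloring (Fin k)) :
    ∀ x y : V, c₁ x = c₁ y ↔ c₂ x = c₂ y := by
  intro x y
  exact ⟨aux_uc G k hk hUC c₁ c₂, aux_uc G k hk hUC c₂ c₁⟩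
end

section
/- If G is an upper-critical graph and c is a proper coloring of G using χ(G) colors, then for every vertex x, the neighborhood of x is exactly the set of vertices y with c(y) ≠ c(x). -/
open SimpleGraph

theorem stmt_1 {V : Type*} [Fintype V] (G : SimpleGraph V) (k : ℕ)
    (hk : G.chromaticNumber = k) (hUC : UpperCritical G)
    (c : G.Coloring (Fin k)) :
    ∀ x : V, G.neighborSet x = {y : V | c y ≠ c x} := by
  intro x
  ext y
  simp only [mem_neighborSet, Set.mem_setOf_eq]
  constructor
  · intro h hc
    exact c.valid h.symm hc
  · intro hne
    by_contra hadj
    have hxy : x ≠ y := fun h => hne (by rw [h])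
    have hlt := hUC x y hxy hadj
    have c' : (G ⊔ SimpleGraph.edge x y).Coloring (Fin k) := by
      refine SimpleGraph.Coloring.mk c ?_
      intro a b hab
      cases hab with
      | inl h => exact c.valid h
      | inr h =>
        rw [SimpleGraph.edge_adj] at h
        rcases h.1 with ⟨rfl, rfl⟩ | ⟨rfl, rfl⟩
        · exact fun h' => hne (h'.symm)
        · exact hne
    have hle : (G ⊔ SimpleGraph.edge x y).chromaticNumber ≤ k := by
      simpa using c'.colorable.chromaticNumber_le
    rw [hk] at hlt
    exact absurd (hlt.trans_le hle) (lt_irrefl _)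
end

section
/- If G is a k-chromatic upper-critical graph, then G contains the complete graph K_k as a subgraph (equivalently, G has a clique of size k). -/
open SimpleGraph

theorem stmt_2 {V : Type*} [Fintype V] [DecidableEq V] (G : SimpleGraph V) (k : ℕ)
    (hk : G.chromaticNumber = k) (hUC : UpperCritical G) :
    ∃ s : Finset V, G.IsNClique k s := by
  have hcol : G.Colorable k := chromaticNumber_le_iff_colorable.mp hk.le
  obtain ⟨C⟩ := hcol
  have hsurj : Function.Surjective C := by
    rw [chromaticNumber_eq_iff_forall_surjective ⟨C⟩] at hk
    exact hk C
  have hsame : ∀ x y : V, x ≠ y → ¬G.Adj x y → C x = C y := by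
    intro x y hxy hadj
    by_contra hne
    have C' : (G ⊔ SimpleGraph.edge x y).Coloring (Fin k) := by
      refine Coloring.mk C ?_
      intro a b hab
      rcases hab with h | h
      · exact C.valid h
      · rw [edge_adj] at h
        rcases h.1 with ⟨rfl, rfl⟩ | ⟨rfl, rfl⟩
        · exact hne
        · exact fun h' => hne h'.symm
    have hle : (G ⊔ SimpleGraph.edge x y).chromaticNumber ≤ k := by
      simpa using C'.colorable.chromaticNumber_le
    exact absurd (hUC x y hxy hadj) (by rw [hk]; exact not_lt.mpr hle)
  choose v hv using hsurj
  have hvinj : Function.Injective v := fun i j h => by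
    rw [← hv i, ← hv j, h]
  refine ⟨Finset.univ.image v, ?_, ?_⟩
  · intro a ha b hb hab
    simp only [Finset.coe_image, Set.mem_image] at ha hb
    obtain ⟨i, -, rfl⟩ := ha
    obtain ⟨j, -, rfl⟩ := hb
    by_contra hadj
    have := hsame _ _ hab hadj
    rw [hv i, hv j] at this
    exact hab (by rw [this])
  · rw [Finset.card_image_of_injective _ hvinj, Finset.card_univ, Fintype.card_fin]
end

section
/- If G is an upper-critical graph and x, y are distinct non-adjacent vertices of G, then N(x) = N(y), i.e., x and y have identical neighborhoods. -/
open SimpleGraph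

/-- In an optimal coloring, if adding edge a b increases χ, then a and b share a color. -/
lemma color_eq_of_lt {V : Type*} {G : SimpleGraph V} {n : ℕ} (C : G.Coloring (Fin n))
    (hn : G.chromaticNumber = n) {a b : V}
    (h : G.chromaticNumber < (G ⊔ SimpleGraph.edge a b).chromaticNumber) : C a = C b := by
  by_contra hne
  have hcol : (G ⊔ SimpleGraph.edge a b).Colorable n := by
    refine ⟨SimpleGraph.Coloring.mk C ?_⟩
    intro u v huv
    rcases huv with huv | huv
    · exact C.valid huv
    · rw [SimpleGraph.edge_adj] at huv
      rcases huv.1 with ⟨rfl, rfl⟩ | ⟨rfl, rfl⟩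
      · exact hne
      · exact fun h' => hne h'.symm
  have := hcol.chromaticNumber_le
  rw [← hn] at this
  exact absurd (lt_of_lt_of_le h this) (lt_irrefl _)

lemma nbhd_subset {V : Type*} [Fintype V] (G : SimpleGraph V) (hUC : UpperCritical G)
    (x y : V) (hxy : x ≠ y) (hadj : ¬G.Adj x y) :
    G.neighborSet x ⊆ G.neighborSet y := by
  intro z hz
  have hxz : G.Adj x z := hz
  have hzy : z ≠ y := fun h => hadj (h ▸ hxz)
  by_contra hyz
  have hyz' : ¬G.Adj y z := hyz
  set n := ENat.toNat G.chromaticNumber with hn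
  have hcol : G.Colorable n := G.colorable_chromaticNumber_of_fintype
  have hnt : G.chromaticNumber = (n : ℕ∞) := by
    have : G.chromaticNumber ≠ ⊤ :=
      SimpleGraph.chromaticNumber_ne_top_iff_exists.2 ⟨Fintype.card V, G.colorable_of_fintype⟩
    exact (ENat.coe_toNat this).symm
  obtain ⟨C⟩ := hcol
  have h1 : C x = C y := color_eq_of_lt C hnt (hUC x y hxy hadj)
  have h2 : C y = C z := color_eq_of_lt C hnt (hUC y z hzy.symm hyz')
  exact C.valid hxz (h1.trans h2)

theorem stmt_3 {V : Type*} [Fintype V] (G : SimpleGraph V) (hUC : UpperCritical G)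
    (x y : V) (hxy : x ≠ y) (hadj : ¬G.Adj x y) :
    G.neighborSet x = G.neighborSet y := by
  exact Set.Subset.antisymm (nbhd_subset G hUC x y hxy hadj)
    (nbhd_subset G hUC y x hxy.symm (fun h => hadj h.symm))
end

section
/- If G is an upper-critical graph, x is a vertex of G, and G' is obtained from G by adding a new vertex y adjacent exactly to the neighbors of x (a copy of x), then G' is also upper-critical and χ(G') = χ(G). -/
open SimpleGraph

/-! The copy `y` of `x` is the vertex `none : Option V`. Folding `y` onto `x` and the inclusion
of `G` are homomorphisms `G' → G` and `G → G'`, so `χ(G') = χ(G)`. Every non-edge of `G'` other than `xy` is the image of a non-edge of `G` under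
one of the homomorphisms `G → G'` that fix `V \ {x}` and send `x` to `x` or to `y`, so adding it
raises `χ` as it does in `G`. The non-edge `xy` needs a direct coloring argument. -/

namespace SimpleGraph

variable {V W : Type*} {G : SimpleGraph V} {H : SimpleGraph W} {s t : V}

def Hom.supEdge (f : G →g H) (hf : f s ≠ f t) : G ⊔ edge s t →g H ⊔ edge (f s) (f t) where
  toFun := f
  map_rel' := by
    rintro v w (h | h)
    · exact Or.inl (f.map_rel h)
    · obtain ⟨⟨rfl, rfl⟩ | ⟨rfl, rfl⟩, -⟩ := (edge_adj ..).mp h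
      · exact Or.inr ((edge_adj ..).mpr ⟨Or.inl ⟨rfl, rfl⟩, hf⟩)
      · exact Or.inr ((edge_adj ..).mpr ⟨Or.inr ⟨rfl, rfl⟩, hf.symm⟩)

def Coloring.supEdge {α : Type*} (C : G.Coloring α) (hC : C s ≠ C t) :
    (G ⊔ edge s t).Coloring α :=
  (Hom.ofLE le_top).comp (Hom.supEdge C hC)

end SimpleGraph

section UpperCritical

variable {V W : Type*} {G : SimpleGraph V} {H : SimpleGraph W} {s t : V}

theorem UpperCritical.eq_of_not_adj (hG : UpperCritical G) {n : ℕ}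
    (hn : G.chromaticNumber = n) (C : G.Coloring (Fin n)) (hst : s ≠ t) (hadj : ¬G.Adj s t) :
    C s = C t := by
  by_contra hC
  exact (hG s t hst hadj).not_ge (hn ▸ Colorable.chromaticNumber_le ⟨C.supEdge hC⟩)

theorem UpperCritical.chromaticNumber_lt_of_hom (hG : UpperCritical G) (f : G →g H)
    (hχ : H.chromaticNumber ≤ G.chromaticNumber) (hst : s ≠ t) (hadj : ¬G.Adj s t)
    (hf : f s ≠ f t) :
    H.chromaticNumber < (H ⊔ edge (f s) (f t)).chromaticNumber :=
  calc H.chromaticNumber ≤ G.chromaticNumber := hχ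
    _ < (G ⊔ edge s t).chromaticNumber := hG s t hst hadj
    _ ≤ (H ⊔ edge (f s) (f t)).chromaticNumber :=
      chromaticNumber_mono_of_hom (f.supEdge hf)

end UpperCritical

structure IsCopyExtension {V : Type*} (G : SimpleGraph V) (x : V) (G' : SimpleGraph (Option V)) :
    Prop where
  adj_some_some : ∀ a b : V, G'.Adj (some a) (some b) ↔ G.Adj a b
  adj_none_some : ∀ a : V, G'.Adj none (some a) ↔ G.Adj x a

namespace IsCopyExtension

variable {V : Type*} {G : SimpleGraph V} {x : V} {G' : SimpleGraph (Option V)}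

def someHom (h : IsCopyExtension G x G') : G →g G' where
  toFun := some
  map_rel' := (h.adj_some_some _ _).mpr

def getDHom (h : IsCopyExtension G x G') : G' →g G where
  toFun o := o.getD x
  map_rel' := by
    rintro (_ | a) (_ | b) hab
    · exact absurd hab (G'.loopless.irrefl none)
    · exact (h.adj_none_some b).mp hab
    · exact ((h.adj_none_some a).mp hab.symm).symm
    · exact (h.adj_some_some a b).mp hab

def replaceHom [DecidableEq V] (h : IsCopyExtension G x G') : G →g G' where
  toFun v := if v = x then none else some v
  map_rel' := by
    intro a b hab
    by_cases hax : a = x <;> by_cases hbx : b = x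
    · exact absurd (hax.trans hbx.symm ▸ hab) (G.loopless.irrefl b)
    · subst hax; simpa [hbx] using (h.adj_none_some b).mpr hab
    · subst hbx; simpa [hax] using ((h.adj_none_some a).mpr hab.symm).symm
    · simpa [hax, hbx] using (h.adj_some_some a b).mpr hab

theorem chromaticNumber_eq (h : IsCopyExtension G x G') :
    G'.chromaticNumber = G.chromaticNumber :=
  le_antisymm (chromaticNumber_mono_of_hom h.getDHom) (chromaticNumber_mono_of_hom h.someHom)

-- A coloring `C` of `G' + xy` restricts to a coloring of `G`, which is onto by minimality; but no
-- vertex of `G` can share the color of `y`: neighbours of `x` are neighbours of `y`, and every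
-- non-neighbour of `x` has the color of `x` by upper-criticality.
theorem chromaticNumber_lt_sup_edge_none_self [Finite V] (h : IsCopyExtension G x G')
    (hG : UpperCritical G) :
    G'.chromaticNumber < (G' ⊔ edge none (some x)).chromaticNumber := by
  obtain ⟨n, hn⟩ := ENat.ne_top_iff_exists.mp
    (chromaticNumber_ne_top_iff_exists.mpr ⟨_, G.colorable_chromaticNumber_of_fintype⟩)
  rw [h.chromaticNumber_eq, ← hn]
  by_contra! hle
  obtain ⟨C⟩ := chromaticNumber_le_iff_colorable.mp hle
  let D : G.Coloring (Fin n) := C.comp ((Hom.ofLE le_sup_left).comp h.someHom)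
  have hyx : C none ≠ C (some x) :=
    C.valid (Or.inr ((edge_adj ..).mpr ⟨Or.inl ⟨rfl, rfl⟩, (Option.some_ne_none x).symm⟩))
  obtain ⟨b, hb⟩ := le_chromaticNumber_iff_forall_surjective.mp hn.le D (C none)
  by_cases hxb : G.Adj x b
  · exact C.valid (Or.inl ((h.adj_none_some b).mpr hxb)) hb.symm
  obtain rfl | hbx := eq_or_ne b x
  · exact hyx hb.symm
  · exact hyx (hb.symm.trans (hG.eq_of_not_adj hn.symm D hbx (fun hbx' => hxb hbx'.symm)))

theorem chromaticNumber_lt_sup_edge_none [Finite V] (h : IsCopyExtension G x G')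
    (hG : UpperCritical G) (a : V) (hadj : ¬G'.Adj none (some a)) :
    G'.chromaticNumber < (G' ⊔ edge none (some a)).chromaticNumber := by
  classical
  obtain rfl | hax := eq_or_ne a x
  · exact h.chromaticNumber_lt_sup_edge_none_self hG
  have hf : h.replaceHom x = none ∧ h.replaceHom a = some a := by simp [replaceHom, hax]
  simpa only [hf] using hG.chromaticNumber_lt_of_hom h.replaceHom h.chromaticNumber_eq.le
    hax.symm (fun hxa => hadj ((h.adj_none_some a).mpr hxa)) (by simp [hf])

theorem upperCritical [Finite V] (h : IsCopyExtension G x G') (hG : UpperCritical G) :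
    UpperCritical G' := by
  rintro (_ | a) (_ | b) hne hadj
  · exact absurd rfl hne
  · exact h.chromaticNumber_lt_sup_edge_none hG b hadj
  · rw [edge_comm]
    exact h.chromaticNumber_lt_sup_edge_none hG a (fun had => hadj had.symm)
  · exact hG.chromaticNumber_lt_of_hom h.someHom h.chromaticNumber_eq.le
      (fun hab => hne (congrArg some hab)) (fun hab => hadj ((h.adj_some_some a b).mpr hab)) hne

end IsCopyExtension

theorem stmt_4 {V : Type*} [Fintype V] (G : SimpleGraph V) (hUC : UpperCritical G)
    (x : V) (G' : SimpleGraph (Option V))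
    (hsome : ∀ a b : V, G'.Adj (some a) (some b) ↔ G.Adj a b)
    (hnew : ∀ a : V, G'.Adj none (some a) ↔ G.Adj x a) :
    UpperCritical G' ∧ G'.chromaticNumber = G.chromaticNumber := by
  have h : IsCopyExtension G x G' := ⟨hsome, hnew⟩
  exact ⟨h.upperCritical hUC, h.chromaticNumber_eq⟩
end

section
/- If G is an upper-critical graph and x is any vertex of G, then the induced subgraph G − x (obtained by deleting x) is also upper-critical. -/
open SimpleGraph

theorem stmt_5 {V : Type*} [Fintype V] (G : SimpleGraph V) (hUC : UpperCritical G)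
    (x : V) :
    UpperCritical (G.induce {v : V | v ≠ x}) := by
  classical
  set T : Set V := {v : V | v ≠ x} with hT
  set H : SimpleGraph T := G.induce T with hH
  set k : ℕ := (G.chromaticNumber).toNat with hk
  have hcol : G.Colorable k := G.colorable_chromaticNumber_of_fintype
  have hne : G.chromaticNumber ≠ ⊤ :=
    (lt_of_le_of_lt hcol.chromaticNumber_le (WithTop.coe_lt_top k)).ne
  have hkeq : (k : ℕ∞) = G.chromaticNumber := ENat.coe_toNat hne
  obtain ⟨c⟩ := hcol
  -- key: nonadjacent vertices get the same color under the optimal coloring c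
  have hkey : ∀ a b : V, ¬ G.Adj a b → c a = c b := by
    intro a b hab
    by_cases hab' : a = b
    · rw [hab']
    · by_contra hne'
      have : (G ⊔ SimpleGraph.edge a b).Colorable k := by
        refine ⟨SimpleGraph.Coloring.mk c ?_⟩
        intro p q hpq
        rcases hpq with hpq | hpq
        · exact c.valid hpq
        · rw [SimpleGraph.edge_adj] at hpq
          rcases hpq.1 with ⟨h1, h2⟩ | ⟨h1, h2⟩
          · rw [h1, h2]; exact hne'
          · rw [h1, h2]; exact fun h => hne' h.symm
      have := this.chromaticNumber_le
      rw [hkeq] at this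
      exact absurd (hUC a b hab' hab) (not_lt.mpr this)
  have hadjc : ∀ a b : V, c a ≠ c b → G.Adj a b := by
    intro a b h
    by_contra hna
    exact h (hkey a b hna)
  intro u v huv hadj
  have hGadj : ¬ G.Adj (u : V) (v : V) := by
    intro h
    exact hadj h
  have hcuv : c (u : V) = c (v : V) := hkey _ _ hGadj
  have huvV : (u : V) ≠ (v : V) := fun h => huv (Subtype.ext h)
  set S : Finset (Fin k) := Finset.image (fun a : T => c (a : V)) Finset.univ with hS
  -- χ(H) ≤ S.card
  have hHcol : H.Colorable S.card := by
    have d0 : H.Coloring S := by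
      refine SimpleGraph.Coloring.mk
        (fun a => ⟨c (a : V), Finset.mem_image.mpr ⟨a, Finset.mem_univ a, rfl⟩⟩) ?_
      intro a b hab
      have : G.Adj (a : V) (b : V) := hab
      simpa [Subtype.ext_iff] using c.valid this
    simpa using d0.colorable
  have hH_le : H.chromaticNumber ≤ (S.card : ℕ∞) := hHcol.chromaticNumber_le
  -- (H ⊔ edge u v) is not S.card-colorable
  have hnot : ¬ (H ⊔ SimpleGraph.edge u v).Colorable S.card := by
    rintro ⟨d⟩
    -- choice function: a vertex of each color
    have hex : ∀ s : S, ∃ a : T, c (a : V) = (s : Fin k) := by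
      intro s
      obtain ⟨a, _, ha⟩ := Finset.mem_image.mp s.2
      exact ⟨a, ha⟩
    choose w hw using hex
    set w' : S → T := fun s => if (s : Fin k) = c (u : V) then u else w s with hw'
    have hw'c : ∀ s : S, c ((w' s : T) : V) = (s : Fin k) := by
      intro s
      rw [hw']
      by_cases h : (s : Fin k) = c (u : V)
      · simp [h]
      · simp [h, hw s]
    set φ : S → Fin S.card := fun s => d (w' s) with hφ
    have hinj : Function.Injective φ := by
      intro s t hst
      by_contra hne'
      have hcne : c ((w' s : T) : V) ≠ c ((w' t : T) : V) := by
        rw [hw'c s, hw'c t]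
        exact fun h => hne' (Subtype.ext h)
      have : (H ⊔ SimpleGraph.edge u v).Adj (w' s) (w' t) :=
        Or.inl (hadjc _ _ hcne)
      exact d.valid this hst
    have hbij : Function.Bijective φ := by
      rw [Fintype.bijective_iff_injective_and_card]
      exact ⟨hinj, by simp⟩
    obtain ⟨s, hs⟩ := hbij.2 (d v)
    by_cases h : (s : Fin k) = c (u : V)
    · have hwu : w' s = u := by rw [hw']; simp [h]
      have : (H ⊔ SimpleGraph.edge u v).Adj u v :=
        Or.inr ((SimpleGraph.edge_adj u v u v).mpr ⟨Or.inl ⟨rfl, rfl⟩, huv⟩)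
      exact d.valid this (by rw [← hs]; show d u = d (w' s); rw [hwu])
    · have hcne : c ((w' s : T) : V) ≠ c (v : V) := by
        rw [hw'c s, ← hcuv]
        exact h
      have : (H ⊔ SimpleGraph.edge u v).Adj (w' s) v :=
        Or.inl (hadjc _ _ hcne)
      exact d.valid this hs
  have hlt : (S.card : ℕ∞) < (H ⊔ SimpleGraph.edge u v).chromaticNumber := by
    by_contra hle
    push_neg at hle
    exact hnot (SimpleGraph.chromaticNumber_le_iff_colorable.mp hle)
  exact lt_of_le_of_lt hH_le hlt
end

section
/- If G is an upper-critical graph and x, y are distinct non-adjacent vertices, then the graph obtained by identifying x and y (replacing them by a single vertex whose neighborhood is N(x) ∪ N(y)) is isomorphic to G − x, and hence is also upper-critical. -/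
open SimpleGraph

/-- In an upper-critical graph, any optimal coloring assigns the same color to any
two distinct non-adjacent vertices. -/
lemma UpperCritical.same_color {V : Type*} {G : SimpleGraph V} (hUC : UpperCritical G)
    {n : ℕ} (C : G.Coloring (Fin n)) (hn : (n : ℕ∞) ≤ G.chromaticNumber)
    {a b : V} (hab : a ≠ b) (hnadj : ¬G.Adj a b) : C a = C b := by
  by_contra hne
  have hcol : (G ⊔ SimpleGraph.edge a b).Colorable n := by
    refine ⟨Coloring.mk (⇑C) ?_⟩
    intro u v huv
    rcases huv with h | h
    · exact C.valid h
    · rw [edge_adj] at h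
      rcases h.1 with ⟨rfl, rfl⟩ | ⟨rfl, rfl⟩
      · exact hne
      · exact fun h' => hne h'.symm
  exact absurd (hcol.chromaticNumber_le.trans hn) (not_le.2 (hUC a b hab hnadj))

theorem stmt_6 {V : Type*} [Fintype V] (G : SimpleGraph V) (hUC : UpperCritical G)
    (x y : V) (hxy : x ≠ y) (hadj : ¬G.Adj x y)
    (H : SimpleGraph {v : V // v ≠ x})
    -- `H` is the identification of `x` and `y`: the vertex `y` plays the role of
    -- the merged vertex `z`, with `N(z) = N(x) ∪ N(y)`.
    (hH : ∀ a b : {v : V // v ≠ x}, H.Adj a b ↔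
      (((a : V) = y ∧ (G.Adj x b ∨ G.Adj y b)) ∨
       ((b : V) = y ∧ (G.Adj x a ∨ G.Adj y a)) ∨
       ((a : V) ≠ y ∧ (b : V) ≠ y ∧ G.Adj a b))) :
    Nonempty (H ≃g G.induce {v : V | v ≠ x}) ∧ UpperCritical H := by
  classical
  -- an optimal coloring of `G`
  have hne_top : G.chromaticNumber ≠ ⊤ :=
    chromaticNumber_ne_top_iff_exists.2 ⟨_, G.colorable_of_fintype⟩
  obtain ⟨C⟩ := G.colorable_chromaticNumber_of_fintype
  have hn : ((G.chromaticNumber.toNat : ℕ) : ℕ∞) ≤ G.chromaticNumber := by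
    rw [ENat.coe_toNat hne_top]
  have hadj' : ¬G.Adj y x := fun h => hadj h.symm
  -- key: `x` and `y` have the same neighborhoods
  have nbr : ∀ w, G.Adj x w ↔ G.Adj y w := by
    intro w
    constructor
    · intro hxw
      by_contra hyw
      have hwy : y ≠ w := by rintro rfl; exact hadj hxw
      have e1 := hUC.same_color C hn hxy hadj
      have e2 := hUC.same_color C hn hwy hyw
      exact C.valid hxw (e1.trans e2)
    · intro hyw
      by_contra hxw
      have hwx : x ≠ w := by rintro rfl; exact hadj' hyw
      have e1 := hUC.same_color C hn hxy.symm hadj'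
      have e2 := hUC.same_color C hn hwx hxw
      exact C.valid hyw (e1.trans e2)
  -- hence `H` is just the induced subgraph on `V \ {x}`
  have hGH : ∀ a b : {v : V // v ≠ x}, H.Adj a b ↔ G.Adj (a : V) (b : V) := by
    intro a b
    rw [hH]
    constructor
    · rintro (⟨ha, hb | hb⟩ | ⟨hb, ha | ha⟩ | ⟨_, _, h⟩)
      · rw [ha]; exact (nbr _).1 hb
      · rw [ha]; exact hb
      · rw [hb]; exact ((nbr _).1 ha).symm
      · rw [hb]; exact ha.symm
      · exact h
    · intro h
      by_cases ha : (a : V) = y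
      · exact Or.inl ⟨ha, Or.inr (ha ▸ h)⟩
      · by_cases hb : (b : V) = y
        · exact Or.inr (Or.inl ⟨hb, Or.inr (hb ▸ h.symm)⟩)
        · exact Or.inr (Or.inr ⟨ha, hb, h⟩)
  refine ⟨⟨⟨Equiv.refl _, ?_⟩⟩, ?_⟩
  · intro a b
    simp only [Equiv.refl_apply, comap_adj, Function.Embedding.coe_subtype]
    exact (hGH a b).symm
  -- `H` is upper-critical
  intro a b hab hnadjH
  have hab' : (a : V) ≠ (b : V) := fun h => hab (Subtype.ext h)
  have hnadjG : ¬G.Adj (a : V) (b : V) := fun h => hnadjH ((hGH a b).2 h)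
  have h1 : H.chromaticNumber ≤ G.chromaticNumber := by
    refine chromaticNumber_le_of_forall_imp ?_
    rintro n ⟨D⟩
    exact ⟨Coloring.mk (fun v => D (v : V)) (fun huv => D.valid ((hGH _ _).1 huv))⟩
  have h2 : (G ⊔ SimpleGraph.edge (a : V) (b : V)).chromaticNumber ≤
      (H ⊔ SimpleGraph.edge a b).chromaticNumber := by
    refine chromaticNumber_le_of_forall_imp ?_
    rintro n ⟨D⟩
    refine ⟨Coloring.mk
      (fun v => if h : v = x then D ⟨y, hxy.symm⟩ else D ⟨v, h⟩) ?_⟩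
    intro u v huv
    have hne : u ≠ v := huv.ne
    -- edges of the added edge don't touch x
    have hedge : ∀ {p q : V}, (SimpleGraph.edge (a : V) (b : V)).Adj p q → p ≠ x ∧ q ≠ x := by
      intro p q h
      rw [edge_adj] at h
      rcases h.1 with ⟨rfl, rfl⟩ | ⟨rfl, rfl⟩
      · exact ⟨a.2, b.2⟩
      · exact ⟨b.2, a.2⟩
    by_cases hu : u = x
    · have hGxv : G.Adj x v := by
        rcases huv with h | h
        · exact hu ▸ h
        · exact absurd hu (hedge h).1
      have hv : v ≠ x := hGxv.ne'
      have hyv : G.Adj y v := (nbr v).1 hGxv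
      simp only [dif_pos hu, dif_neg hv]
      exact D.valid (Or.inl ((hGH ⟨y, hxy.symm⟩ ⟨v, hv⟩).2 hyv))
    · by_cases hv : v = x
      · have hGxu : G.Adj x u := by
          rcases huv with h | h
          · exact hv ▸ h.symm
          · exact absurd hv (hedge h).2
        have hyu : G.Adj y u := (nbr u).1 hGxu
        simp only [dif_neg hu, dif_pos hv]
        exact fun h => (D.valid (Or.inl ((hGH ⟨y, hxy.symm⟩ ⟨u, hu⟩).2 hyu)) h.symm)
      · simp only [dif_neg hu, dif_neg hv]
        refine D.valid ?_
        rcases huv with h | h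
        · exact Or.inl ((hGH _ _).2 h)
        · refine Or.inr ?_
          rw [edge_adj] at h ⊢
          constructor
          · rcases h.1 with ⟨h1, h2⟩ | ⟨h1, h2⟩
            · exact Or.inl ⟨Subtype.ext h1, Subtype.ext h2⟩
            · exact Or.inr ⟨Subtype.ext h1, Subtype.ext h2⟩
          · exact fun heq => hne (congrArg Subtype.val heq)
  exact lt_of_le_of_lt h1 (lt_of_lt_of_le (hUC _ _ hab' hnadjG) h2)
end

section
/- If G is an upper-critical graph and e = xy is an edge of G, then the graph G/e obtained by contracting e is also upper-critical. -/
open SimpleGraph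

/-!
A finite graph is upper-critical exactly when it is complete multipartite, i.e. when
non-adjacency is transitive. Indeed, in an optimal colouring two distinct non-adjacent vertices
must share a colour, since otherwise the edge between them could be added without a new colour.
Conversely, if `a b` is a non-edge, one vertex from each part together with `b` (taking `a` as the
representative of its own part) is a clique of `G ⊔ edge a b` with one more vertex than there are
parts. Contracting `xy` pushes `G` forward along the surjection identifying `x` with `y`, and a
pushforward along a surjection keeps non-adjacency transitive.
-/

section

variable {V W : Type*} {G : SimpleGraph V}

lemma UpperCritical.coloring_eq_of_not_adj [Finite V] (hG : UpperCritical G)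
    (C : G.Coloring (Fin G.chromaticNumber.toNat)) {u v : V} (huv : u ≠ v)
    (hnadj : ¬G.Adj u v) : C u = C v := by
  by_contra hC
  let C' : (G ⊔ edge u v).Coloring (Fin G.chromaticNumber.toNat) :=
    Coloring.mk C fun {p q} hpq => by
      rcases hpq with h | h
      · exact C.valid h
      · obtain ⟨⟨rfl, rfl⟩ | ⟨rfl, rfl⟩, -⟩ := (edge_adj _ _ _ _).1 h
        exacts [hC, Ne.symm hC]
  have hfin : G.chromaticNumber ≠ ⊤ := chromaticNumber_ne_top_iff_exists.2 ⟨_, ⟨C⟩⟩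
  have := (hG u v huv hnadj).trans_le (Coloring.colorable C').chromaticNumber_le
  simp [ENat.natCast_toNat hfin] at this

lemma UpperCritical.isCompleteMultipartite [Finite V] (hG : UpperCritical G) :
    G.IsCompleteMultipartite := by
  obtain ⟨C⟩ := G.colorable_chromaticNumber_of_fintype
  have hconst : ∀ u v, ¬G.Adj u v → C u = C v := fun u v hnadj => by
    rcases eq_or_ne u v with rfl | huv
    exacts [rfl, hG.coloring_eq_of_not_adj C huv hnadj]
  exact ⟨fun u v w huv hvw huw => C.valid huw ((hconst u v huv).trans (hconst v w hvw))⟩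

lemma SimpleGraph.IsCompleteMultipartite.upperCritical [Finite V]
    (hG : G.IsCompleteMultipartite) : UpperCritical G := by
  classical
  intro a b hab hnadj
  let Q := Quotient hG.setoid
  have : Fintype Q := Fintype.ofFinite Q
  have hle : G.chromaticNumber ≤ Fintype.card Q :=
    (Coloring.mk (Quotient.mk hG.setoid) fun {u v} huv heq =>
      (Quotient.eq.1 heq : ¬G.Adj u v) huv).colorable.chromaticNumber_le
  let rep : Q → V := Function.update Quotient.out ⟦a⟧ a
  have hrep : ∀ q, (⟦rep q⟧ : Q) = q := fun q => by
    by_cases hq : q = ⟦a⟧ <;> simp [rep, hq]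
  have hba : (⟦b⟧ : Q) = ⟦a⟧ := Quotient.sound fun h => hnadj h.symm
  have hrep_adj : ∀ p q, p ≠ q → G.Adj (rep p) (rep q) := fun p q hpq => by
    by_contra h
    exact hpq (by rw [← hrep p, ← hrep q]; exact Quotient.sound h)
  have hb_adj : ∀ q, (G ⊔ edge a b).Adj b (rep q) := fun q => by
    by_cases hq : q = ⟦a⟧
    · right
      simp [rep, hq, edge_adj, hab.symm]
    · left
      by_contra h
      exact hq (by rw [← hrep q, ← hba]; exact Quotient.sound fun h' => h h'.symm)
  have hclique : Pairwise fun i j : Option Q =>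
      (G ⊔ edge a b).Adj (i.elim b rep) (j.elim b rep) := by
    rintro (_ | p) (_ | q) hpq
    · exact absurd rfl hpq
    · exact hb_adj q
    · exact (hb_adj p).symm
    · exact Or.inl (hrep_adj p q fun h => hpq (congrArg some h))
  calc G.chromaticNumber ≤ Fintype.card Q := hle
    _ < Fintype.card Q + 1 := by exact_mod_cast Nat.lt_succ_self _
    _ ≤ (G ⊔ edge a b).chromaticNumber :=
      le_chromaticNumber_of_pairwise_adj (by simp [Nat.card_eq_fintype_card]) _ hclique

lemma SimpleGraph.IsCompleteMultipartite.map_of_surjective (hG : G.IsCompleteMultipartite)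
    {f : V → W} (hf : Function.Surjective f) : (G.map f).IsCompleteMultipartite := by
  refine ⟨fun a b c hab hbc hac => ?_⟩
  obtain ⟨hne, u, w, huw, rfl, rfl⟩ := (map_adj' _ _ _ _).1 hac
  obtain ⟨v, rfl⟩ := hf b
  have hnuv : ¬G.Adj u v := fun h =>
    hab ⟨fun e => hbc (e ▸ ⟨hne, u, w, huw, rfl, rfl⟩), u, v, h, rfl, rfl⟩
  have hnvw : ¬G.Adj v w := fun h =>
    hbc ⟨fun e => hab (e ▸ ⟨hne, u, w, huw, rfl, rfl⟩), v, w, h, rfl, rfl⟩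
  exact hG.trans u v w hnuv hnvw huw

def contractionMap [DecidableEq V] {x y : V} (hyx : y ≠ x) (v : V) : {v : V // v ≠ x} :=
  if h : v = x then ⟨y, hyx⟩ else ⟨v, h⟩

lemma contractionMap_surjective [DecidableEq V] {x y : V} (hyx : y ≠ x) :
    Function.Surjective (contractionMap hyx) :=
  fun a => ⟨a, dif_neg a.2⟩

lemma contractionMap_eq_iff [DecidableEq V] {x y : V} (hyx : y ≠ x) (v : V)
    (a : {v : V // v ≠ x}) :
    contractionMap hyx v = a ↔ v = a ∨ v = x ∧ (a : V) = y := by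
  unfold contractionMap
  split_ifs with h
  · subst h; simp [Subtype.ext_iff, eq_comm, a.2.symm]
  · simp [Subtype.ext_iff, h]

lemma map_contractionMap_adj [DecidableEq V] {x y : V} (hyx : y ≠ x) (a b : {v : V // v ≠ x}) :
    (G.map (contractionMap hyx)).Adj a b ↔
      (((a : V) = y ∧ (b : V) ≠ y ∧ (G.Adj x b ∨ G.Adj y b)) ∨
       ((b : V) = y ∧ (a : V) ≠ y ∧ (G.Adj x a ∨ G.Adj y a)) ∨
       ((a : V) ≠ y ∧ (b : V) ≠ y ∧ G.Adj a b)) := by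
  obtain ⟨a, ha⟩ := a
  obtain ⟨b, hb⟩ := b
  simp only [map_adj', contractionMap_eq_iff, ne_eq, Subtype.mk.injEq]
  grind [SimpleGraph.irrefl, SimpleGraph.adj_comm]

end

theorem stmt_7 {V : Type*} [Fintype V] (G : SimpleGraph V) (hUC : UpperCritical G)
    (x y : V) (hadj : G.Adj x y)
    (H : SimpleGraph {v : V // v ≠ x})
    -- `H` is the contraction `G/xy`: the vertex `y` plays the role of the merged
    -- vertex `z`, with `N(z) = (N(x) ∪ N(y)) \ {x, y}`.
    (hH : ∀ a b : {v : V // v ≠ x}, H.Adj a b ↔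
      (((a : V) = y ∧ (b : V) ≠ y ∧ (G.Adj x b ∨ G.Adj y b)) ∨
       ((b : V) = y ∧ (a : V) ≠ y ∧ (G.Adj x a ∨ G.Adj y a)) ∨
       ((a : V) ≠ y ∧ (b : V) ≠ y ∧ G.Adj a b))) :
    UpperCritical H := by
  classical
  have hyx : y ≠ x := hadj.ne.symm
  have hH_eq : H = G.map (contractionMap hyx) := by
    ext a b
    rw [hH, map_contractionMap_adj]
  rw [hH_eq]
  exact (hUC.isCompleteMultipartite.map_of_surjective (contractionMap_surjective hyx)).upperCritical
end

section
/- If G is an upper-critical graph with N vertices and chromatic number k, and x is a vertex that is not adjacent to all other vertices, then G − x has N − 1 vertices and chromatic number k. -/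
open SimpleGraph

/-!
Deleting a vertex never raises the chromatic number, and lowers it by at most one. If `x` has a
non-neighbour `w`, adding the edge `xw` does not change `G - x`, so by upper-criticality
`χ(G) < χ(G + xw) ≤ χ(G - x) + 1`, i.e. `χ(G) ≤ χ(G - x)`.
-/

namespace SimpleGraph

variable {V : Type*} {G : SimpleGraph V}

theorem Colorable.of_induce_ne {x : V} {n : ℕ} (h : (G.induce {v | v ≠ x}).Colorable n) :
    G.Colorable (n + 1) := by
  classical
  obtain ⟨C⟩ := h
  refine ⟨Coloring.mk (fun v => if hv : v = x then Fin.last n else (C ⟨v, hv⟩).castSucc) ?_⟩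
  intro a b hab
  by_cases ha : a = x <;> by_cases hb : b = x
  · exact absurd (ha.trans hb.symm) hab.ne
  · simp [ha, hb, (Fin.castSucc_lt_last _).ne']
  · simp [ha, hb, (Fin.castSucc_lt_last _).ne]
  · have hab' : (G.induce {v | v ≠ x}).Adj ⟨a, ha⟩ ⟨b, hb⟩ := hab
    simpa [ha, hb] using C.valid hab'

theorem chromaticNumber_le_induce_ne_add_one (G : SimpleGraph V) (x : V) :
    G.chromaticNumber ≤ (G.induce {v | v ≠ x}).chromaticNumber + 1 := by
  cases h : (G.induce {v | v ≠ x}).chromaticNumber using ENat.recTopCoe with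
  | top => simp
  | coe n =>
    have hcol : (G.induce {v | v ≠ x}).Colorable n := chromaticNumber_le_iff_colorable.mp h.le
    exact_mod_cast hcol.of_induce_ne.chromaticNumber_le

theorem induce_ne_sup_edge (G : SimpleGraph V) (x w : V) :
    (G ⊔ edge x w).induce {v | v ≠ x} = G.induce {v | v ≠ x} := by
  ext ⟨a, ha⟩ ⟨b, hb⟩
  simp only [comap_adj, Function.Embedding.subtype_apply, sup_adj, edge_adj, or_iff_left_iff_imp]
  rintro ⟨(⟨rfl, -⟩ | ⟨-, rfl⟩), -⟩ <;> simp_all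

end SimpleGraph

theorem UpperCritical.chromaticNumber_le_induce_ne {V : Type*} {G : SimpleGraph V}
    (hG : UpperCritical G) {x w : V} (hwx : w ≠ x) (hxw : ¬G.Adj x w) :
    G.chromaticNumber ≤ (G.induce {v | v ≠ x}).chromaticNumber :=
  Order.le_of_lt_add_one <| calc
    G.chromaticNumber < (G ⊔ edge x w).chromaticNumber := hG x w hwx.symm hxw
    _ ≤ ((G ⊔ edge x w).induce {v | v ≠ x}).chromaticNumber + 1 :=
      chromaticNumber_le_induce_ne_add_one _ x
    _ = (G.induce {v | v ≠ x}).chromaticNumber + 1 := by rw [induce_ne_sup_edge]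

theorem stmt_13 {V : Type*} [Fintype V] [DecidableEq V] (G : SimpleGraph V)
    (N k : ℕ) (hN : Fintype.card V = N) (hk : G.chromaticNumber = k)
    (hUC : UpperCritical G)
    (x : V) (hx : ∃ w : V, w ≠ x ∧ ¬G.Adj x w) :
    Fintype.card {v : V // v ≠ x} = N - 1 ∧
      (G.induce {v : V | v ≠ x}).chromaticNumber = k := by
  obtain ⟨w, hwx, hxw⟩ := hx
  refine ⟨hN ▸ Set.card_ne_eq x, ?_⟩
  rw [← hk]
  exact le_antisymm (chromaticNumber_mono_of_hom (Embedding.induce _).toHom)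
    (hUC.chromaticNumber_le_induce_ne hwx hxw)
end

section
/- If G is an upper-critical graph on at least 2 vertices and G is not complete, then the number of vertices of G is at least χ(G) + 1, and G has two distinct vertices with identical neighborhoods. -/
open SimpleGraph

theorem stmt_18 {V : Type*} [Fintype V] (G : SimpleGraph V)
    (hcard : 2 ≤ Fintype.card V) (hUC : UpperCritical G)
    (hnc : ¬∀ x y : V, x ≠ y → G.Adj x y) :
    G.chromaticNumber + 1 ≤ (Fintype.card V : ℕ∞) ∧
      ∃ x y : V, x ≠ y ∧ G.neighborSet x = G.neighborSet y := by
  push_neg at hnc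
  obtain ⟨x, y, hxy, hna⟩ := hnc
  have hlt := hUC x y hxy hna
  have hle : (G ⊔ SimpleGraph.edge x y).chromaticNumber ≤ (Fintype.card V : ℕ∞) :=
    (SimpleGraph.colorable_of_fintype _).chromaticNumber_le
  constructor
  · exact Order.add_one_le_of_lt (lt_of_lt_of_le hlt hle)
  · -- get a coloring with χ(G) colors
    set n := G.chromaticNumber.toNat with hn
    have hC : G.Colorable n := G.colorable_chromaticNumber_of_fintype
    have hχ : G.chromaticNumber = (n : ℕ∞) := by
      have hne : G.chromaticNumber ≠ ⊤ :=
        ne_top_of_le_ne_top (by simp) (G.colorable_of_fintype.chromaticNumber_le)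
      exact (ENat.coe_toNat hne).symm
    obtain ⟨C⟩ := hC
    -- key: any two distinct nonadjacent vertices get the same color
    have key : ∀ a b : V, a ≠ b → ¬G.Adj a b → C a = C b := by
      intro a b hab hnab
      by_contra hne
      have : (G ⊔ SimpleGraph.edge a b).Colorable n := by
        refine ⟨SimpleGraph.Coloring.mk C ?_⟩
        intro u v huv
        rcases huv with h | h
        · exact C.valid h
        · rw [SimpleGraph.edge_adj] at h
          rcases h.1 with ⟨rfl, rfl⟩ | ⟨rfl, rfl⟩
          · exact hne
          · exact fun h' => hne h'.symm
      have h2 := hUC a b hab hnab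
      rw [hχ] at h2
      exact absurd this.chromaticNumber_le (not_le_of_gt h2)
    refine ⟨x, y, hxy, ?_⟩
    ext z
    simp only [SimpleGraph.mem_neighborSet]
    have hcxy := key x y hxy hna
    constructor
    · intro hxz
      by_contra hyz
      have hzy : z ≠ y := fun h => hna (h ▸ hxz)
      have := key z y hzy (fun h => hyz h.symm)
      exact C.valid hxz (hcxy.trans this.symm)
    · intro hyz
      by_contra hxz
      have hzx : z ≠ x := fun h => hna (h ▸ hyz).symm
      have := key z x hzx (fun h => hxz h.symm)
      exact C.valid hyz (hcxy.symm.trans this.symm)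
end

section
/- If G is an upper-critical graph and x, y are adjacent vertices both of which are complete vertices, then the contraction G/xy is upper-critical with one fewer vertex and chromatic number χ(G) − 1. -/
open SimpleGraph

/-! Since `y` is complete, merging `x` into `y` creates no new edges, so `G/xy` is just `G - x`.
Deleting a complete vertex lowers the chromatic number by exactly one (its colour class is `{x}`),
and this applies equally to `G` and to every `G + ab` with `a, b ≠ x`; hence the strict increase
of `χ` under adding an edge passes from `G` to `G - x`. -/

lemma ENat.eq_of_forall_le_natCast_iff {a b : ℕ∞} (h : ∀ n : ℕ, a ≤ n ↔ b ≤ n) : a = b := by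
  induction a using ENat.recTopCoe <;> induction b using ENat.recTopCoe
  · rfl
  · simpa using (h _).2 le_rfl
  · simpa using (h _).1 le_rfl
  · exact le_antisymm ((h _).2 le_rfl) ((h _).1 le_rfl)

namespace SimpleGraph

variable {V : Type*} {G : SimpleGraph V} {x : V}

abbrev deleteVert (G : SimpleGraph V) (x : V) : SimpleGraph {v : V // v ≠ x} :=
  G.comap Subtype.val

lemma colorable_succ_iff_deleteVert_colorable (hx : ∀ w, w ≠ x → G.Adj x w) (n : ℕ) :
    G.Colorable (n + 1) ↔ (G.deleteVert x).Colorable n := by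
  constructor
  · rintro ⟨c⟩
    let d : (G.deleteVert x).Coloring {i // i ≠ c x} :=
      Coloring.mk (fun v => ⟨c v, (c.valid (hx v v.2)).symm⟩)
        fun h heq => c.valid h (congrArg Subtype.val heq)
    simpa using d.colorable
  · rintro ⟨d⟩
    classical
    let c : G.Coloring (Option (Fin n)) :=
      Coloring.mk (fun v => if h : v = x then none else some (d ⟨v, h⟩)) fun {u v} huv => by
        by_cases hu : u = x <;> by_cases hv : v = x
        · exact absurd (hu ▸ hv ▸ huv) G.irrefl
        · simp [hu, hv]
        · simp [hu, hv]
        · simpa [hu, hv] using d.valid (show (G.deleteVert x).Adj ⟨u, hu⟩ ⟨v, hv⟩ from huv)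
    simpa using c.colorable

lemma chromaticNumber_eq_deleteVert_add_one (hx : ∀ w, w ≠ x → G.Adj x w) :
    G.chromaticNumber = (G.deleteVert x).chromaticNumber + 1 := by
  refine ENat.eq_of_forall_le_natCast_iff fun n => ?_
  rcases n with _ | m
  · rw [chromaticNumber_le_iff_colorable, colorable_zero_iff, Nat.cast_zero, nonpos_iff_eq_zero]
    exact iff_of_false (fun h => h.false x) (by simp)
  · rw [chromaticNumber_le_iff_colorable, colorable_succ_iff_deleteVert_colorable hx,
      ← chromaticNumber_le_iff_colorable, Nat.cast_add_one, ENat.add_le_add_iff_right ENat.one_ne_top]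

lemma deleteVert_sup_edge (a b : {v : V // v ≠ x}) :
    (G ⊔ edge a b).deleteVert x = G.deleteVert x ⊔ edge a b := by
  ext u v
  simp [edge_adj, Subtype.ext_iff]

lemma UpperCritical.deleteVert (hG : UpperCritical G) (hx : ∀ w, w ≠ x → G.Adj x w) :
    UpperCritical (G.deleteVert x) := by
  intro a b hab hnadj
  have hcrit := hG a b (Subtype.coe_ne_coe.2 hab) hnadj
  have hx' : ∀ w, w ≠ x → (G ⊔ edge a b).Adj x w := fun w hw => Or.inl (hx w hw)
  rwa [chromaticNumber_eq_deleteVert_add_one hx, chromaticNumber_eq_deleteVert_add_one hx',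
    deleteVert_sup_edge, ENat.add_lt_add_iff_right ENat.one_ne_top] at hcrit

end SimpleGraph

theorem stmt_19_general {V : Type*} [Fintype V] [DecidableEq V] (G : SimpleGraph V) (hUC : UpperCritical G)
    (x y : V)
    (hx : ∀ w : V, w ≠ x → G.Adj x w) (hy : ∀ w : V, w ≠ y → G.Adj y w)
    (H : SimpleGraph {v : V // v ≠ x})
    -- `H` is the contraction `G/xy`, with `y` playing the role of the merged vertex.
    (hH : ∀ a b : {v : V // v ≠ x}, H.Adj a b ↔
      (((a : V) = y ∧ (b : V) ≠ y ∧ (G.Adj x b ∨ G.Adj y b)) ∨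
       ((b : V) = y ∧ (a : V) ≠ y ∧ (G.Adj x a ∨ G.Adj y a)) ∨
       ((a : V) ≠ y ∧ (b : V) ≠ y ∧ G.Adj a b))) :
    UpperCritical H ∧ Fintype.card {v : V // v ≠ x} = Fintype.card V - 1 ∧
      H.chromaticNumber = G.chromaticNumber - 1 := by
  have hHG : H = G.deleteVert x := by
    ext a b
    rw [hH, comap_adj]
    rcases eq_or_ne (a : V) y with ha | ha <;> rcases eq_or_ne (b : V) y with hb | hb
    · simp [ha, hb]
    · simp [ha, hb, hx b b.2, hy b hb]
    · simp [ha, hb, hx a a.2, (hy a ha).symm]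
    · simp [ha, hb]
  subst hHG
  refine ⟨hUC.deleteVert hx, ?_, ?_⟩
  · exact Set.card_ne_eq x
  · rw [chromaticNumber_eq_deleteVert_add_one hx]
    exact (ENat.addLECancellable_of_ne_top ENat.one_ne_top).add_tsub_cancel_right.symm

theorem stmt_19 {V : Type*} [Fintype V] [DecidableEq V] (G : SimpleGraph V) (hUC : UpperCritical G)
    (x y : V) (hadj : G.Adj x y)
    (hx : ∀ w : V, w ≠ x → G.Adj x w) (hy : ∀ w : V, w ≠ y → G.Adj y w)
    (H : SimpleGraph {v : V // v ≠ x})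
    -- `H` is the contraction `G/xy`, with `y` playing the role of the merged vertex.
    (hH : ∀ a b : {v : V // v ≠ x}, H.Adj a b ↔
      (((a : V) = y ∧ (b : V) ≠ y ∧ (G.Adj x b ∨ G.Adj y b)) ∨
       ((b : V) = y ∧ (a : V) ≠ y ∧ (G.Adj x a ∨ G.Adj y a)) ∨
       ((a : V) ≠ y ∧ (b : V) ≠ y ∧ G.Adj a b))) :
    UpperCritical H ∧ Fintype.card {v : V // v ≠ x} = Fintype.card V - 1 ∧
      H.chromaticNumber = G.chromaticNumber - 1 :=
  stmt_19_general G hUC x y hx hy H hH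
end
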